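/- arXiv:2410.14510 — 5 statements merged into one kernel-verified Lean document; each statement's English description precedes it below -/
import Mathlib

section
/- Let G be a group, p a prime, and m, n ≥ 1 integers. Fix a set R of representatives of the orbits of the simultaneous conjugation action of G on G_{n,p}. Then the map from the disjoint union, over (g_1, …, g_n) ∈ R, of the orbit sets C⟨g_1,…,g_n⟩ \ C⟨g_1,…,g_n⟩_{m,p} to G \ G_{m+n,p}, which sends the class of an m-tuple (x_1, …, x_m) of pairwise commuting p-power order elements of the centralizer C⟨g_1,…,g_n⟩ to the G-conjugacy class of the (m+n)-tuple (x_1, …, x_m, g_1, …, g_n), is well defined and bijective. -/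
/-- `pTuples G p n` is the set `G_{n,p}` of `n`-tuples of pairwise commuting elements
of `G`, each of order a power of `p`. -/
def pTuples (G : Type*) [Group G] (p n : ℕ) : Set (Fin n → G) :=
  {v | (∀ i j, Commute (v i) (v j)) ∧ ∀ i, ∃ k : ℕ, orderOf (v i) = p ^ k}

/-- Simultaneous conjugation relation on a set of tuples. -/
def tupleConj {G : Type*} [Group G] {n : ℕ} (s : Set (Fin n → G)) (a b : s) : Prop :=
  ∃ g : G, ∀ i, g * a.1 i * g⁻¹ = b.1 i

/-- The centralizer in `G` of the subgroup generated by the entries of a tuple. -/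
def tupleCentralizer {G : Type*} [Group G] {n : ℕ} (v : Fin n → G) : Subgroup G :=
  Subgroup.centralizer (Subgroup.closure (Set.range v) : Set G)

/-! The last `n` entries of a tuple in `G_{m+n,p}` are conjugate to a unique `r ∈ R`. Once they
are conjugated to `r` itself, the remaining freedom is exactly conjugation by `C⟨r⟩`, and the
first `m` entries then form a commuting `p`-tuple in `C⟨r⟩`. -/

section

variable {G : Type*} [Group G] {p m n : ℕ}

lemma mem_tupleCentralizer_iff {r : Fin n → G} {c : G} :
    c ∈ tupleCentralizer r ↔ ∀ j, Commute c (r j) := by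
  simp only [tupleCentralizer, Subgroup.centralizer_closure, Subgroup.mem_centralizer_iff,
    Set.forall_mem_range]
  exact forall_congr' fun _ => eq_comm

lemma mem_tupleCentralizer_iff_conj {r : Fin n → G} {c : G} :
    c ∈ tupleCentralizer r ↔ ∀ j, c * r j * c⁻¹ = r j := by
  simp only [mem_tupleCentralizer_iff, mul_inv_eq_iff_eq_mul]
  rfl

lemma tupleConj_equivalence (s : Set (Fin n → G)) : Equivalence (tupleConj s) where
  refl _ := ⟨1, by simp⟩
  symm := fun ⟨g, hg⟩ => ⟨g⁻¹, fun i => by rw [← hg i]; group⟩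
  trans := fun ⟨g, hg⟩ ⟨g', hg'⟩ => ⟨g' * g, fun i => by rw [← hg' i, ← hg i]; group⟩

lemma comp_mem_pTuples_iff {H : Type*} [Group H] {f : G →* H} (hf : Function.Injective f)
    {v : Fin n → G} : f ∘ v ∈ pTuples H p n ↔ v ∈ pTuples G p n := by
  simp only [pTuples, Set.mem_ofPred_eq, Function.comp_apply, orderOf_injective f hf]
  exact and_congr_left' <| forall₂_congr fun _ _ => ⟨Commute.of_map hf, fun h => h.map f⟩

lemma mem_pTuples_of_conj_mem {v w : Fin n → G} {g : G} (h : ∀ i, g * w i * g⁻¹ = v i)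
    (hv : v ∈ pTuples G p n) : w ∈ pTuples G p n := by
  have hw : (MulAut.conj g).toMonoidHom ∘ w = v := funext h
  rw [← comp_mem_pTuples_iff (f := (MulAut.conj g).toMonoidHom) (MulAut.conj g).injective, hw]
  exact hv

lemma append_mem_pTuples_iff {u : Fin m → G} {v : Fin n → G} :
    Fin.append u v ∈ pTuples G p (m + n) ↔
      u ∈ pTuples G p m ∧ v ∈ pTuples G p n ∧ ∀ i j, Commute (u i) (v j) := by
  simp only [pTuples, Set.mem_ofPred_eq, Fin.forall_fin_add, Fin.append_left, Fin.append_right]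
  have hvu : (∀ j i, Commute (v j) (u i)) ↔ ∀ i j, Commute (u i) (v j) :=
    ⟨fun h i j => (h j i).symm, fun h j i => (h i j).symm⟩
  simp only [forall_and, hvu]
  tauto

lemma conj_append_eq_append_iff {u u' : Fin m → G} {v v' : Fin n → G} {g : G} :
    (∀ i, g * Fin.append u v i * g⁻¹ = Fin.append u' v' i) ↔
      (∀ i, g * u i * g⁻¹ = u' i) ∧ ∀ j, g * v j * g⁻¹ = v' j := by
  simp only [Fin.forall_fin_add, Fin.append_left, Fin.append_right]

lemma append_mem_pTuples {r : Fin n → G} (hr : r ∈ pTuples G p n)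
    {x : Fin m → tupleCentralizer r} (hx : x ∈ pTuples (tupleCentralizer r) p m) :
    Fin.append (fun i => (x i : G)) r ∈ pTuples G p (m + n) :=
  append_mem_pTuples_iff.mpr
    ⟨(comp_mem_pTuples_iff (f := (tupleCentralizer r).subtype) Subtype.coe_injective).mpr hx, hr,
      fun i => mem_tupleCentralizer_iff.mp (x i).2⟩

lemma exists_pTuples_tupleCentralizer_of_append_mem {r : Fin n → G} {u : Fin m → G}
    (h : Fin.append u r ∈ pTuples G p (m + n)) :
    ∃ x : pTuples (tupleCentralizer r) p m, (fun i => (x.1 i : G)) = u := by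
  obtain ⟨hu, -, hur⟩ := append_mem_pTuples_iff.mp h
  let x : Fin m → tupleCentralizer r := fun i => ⟨u i, mem_tupleCentralizer_iff.mpr (hur i)⟩
  exact ⟨⟨x, (comp_mem_pTuples_iff (f := (tupleCentralizer r).subtype)
    Subtype.coe_injective).mp hu⟩, rfl⟩

variable {R : Set (Fin n → G)} (hR : R ⊆ pTuples G p n)

def appendClass :
    ((r : R) × Quot (tupleConj (pTuples (tupleCentralizer r.1) p m))) →
      Quot (tupleConj (pTuples G p (m + n))) :=
  fun q => Quot.lift
    (fun x => Quot.mk _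
      ⟨Fin.append (fun i => (x.1 i : G)) q.1.1, append_mem_pTuples (hR q.1.2) x.2⟩)
    (fun _ _ ⟨c, hc⟩ => Quot.sound ⟨c, conj_append_eq_append_iff.mpr
      ⟨fun i => congrArg Subtype.val (hc i), mem_tupleCentralizer_iff_conj.mp c.2⟩⟩)
    q.2

lemma appendClass_injective
    (hR_unique : ∀ r ∈ R, ∀ r' ∈ R, ∀ g : G, (∀ i, g * r i * g⁻¹ = r' i) → r = r') :
    Function.Injective (appendClass (m := m) hR) := by
  rintro ⟨⟨r, hr⟩, ⟨x⟩⟩ ⟨⟨r', hr'⟩, ⟨x'⟩⟩ h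
  obtain ⟨g, hg⟩ := (Equivalence.eqvGen_iff (tupleConj_equivalence _)).mp (Quot.eqvGen_exact h)
  replace hg : ∀ i, g * Fin.append (fun i => (x.1 i : G)) r i * g⁻¹ =
      Fin.append (fun i => (x'.1 i : G)) r' i := hg
  obtain ⟨hx, hrr'⟩ := conj_append_eq_append_iff.mp hg
  obtain rfl := hR_unique r hr r' hr' g hrr'
  have hgr : g ∈ tupleCentralizer r := mem_tupleCentralizer_iff_conj.mpr hrr'
  exact Sigma.ext rfl <| heq_of_eq <| Quot.sound ⟨⟨g, hgr⟩, fun i => Subtype.ext (hx i)⟩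

lemma appendClass_surjective
    (hR_exists : ∀ v ∈ pTuples G p n, ∃ r ∈ R, ∃ g : G, ∀ i, g * r i * g⁻¹ = v i) :
    Function.Surjective (appendClass (m := m) hR) := by
  rintro ⟨w, hw⟩
  obtain ⟨u, v, rfl⟩ : ∃ u v, Fin.append u v = w := ⟨_, _, Fin.append_castAdd_natAdd⟩
  obtain ⟨r, hr, g, hg⟩ := hR_exists v (append_mem_pTuples_iff.mp hw).2.1
  have hconj : ∀ i, g * Fin.append (fun i => g⁻¹ * u i * g) r i * g⁻¹ = Fin.append u v i :=
    conj_append_eq_append_iff.mpr ⟨fun i => by group, hg⟩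
  obtain ⟨x, hx⟩ :=
    exists_pTuples_tupleCentralizer_of_append_mem (mem_pTuples_of_conj_mem hconj hw)
  exact ⟨⟨⟨r, hr⟩, Quot.mk _ x⟩, Quot.sound ⟨g, fun i => by simpa only [← hx] using hconj i⟩⟩

end

theorem orbit_decomposition_of_tuples_general {G : Type*} [Group G] (p m n : ℕ)
    (R : Set (Fin n → G)) (hR₁ : R ⊆ pTuples G p n)
    (hR₂ : ∀ v ∈ pTuples G p n, ∃! r, r ∈ R ∧ ∃ g : G, ∀ i, g * r i * g⁻¹ = v i) :
    (∀ (r : Fin n → G), r ∈ R → ∀ x : Fin m → tupleCentralizer r,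
        x ∈ pTuples (tupleCentralizer r) p m →
        Fin.append (fun i => (x i : G)) r ∈ pTuples G p (m + n)) ∧
    ∃ f : ((r : R) × Quot (tupleConj (pTuples (tupleCentralizer r.1) p m))) →
        Quot (tupleConj (pTuples G p (m + n))),
      Function.Bijective f ∧
      ∀ (r : R) (x : pTuples (tupleCentralizer r.1) p m)
        (h : Fin.append (fun i => (x.1 i : G)) r.1 ∈ pTuples G p (m + n)),
        f ⟨r, Quot.mk _ x⟩ = Quot.mk _ ⟨Fin.append (fun i => (x.1 i : G)) r.1, h⟩ := by
  have hR_unique : ∀ r ∈ R, ∀ r' ∈ R, ∀ g : G, (∀ i, g * r i * g⁻¹ = r' i) → r = r' :=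
    fun r hr r' hr' g hg => (hR₂ r' (hR₁ hr')).unique ⟨hr, g, hg⟩ ⟨hr', 1, by simp⟩
  have hR_exists : ∀ v ∈ pTuples G p n, ∃ r ∈ R, ∃ g : G, ∀ i, g * r i * g⁻¹ = v i :=
    fun v hv => (hR₂ v hv).exists
  exact ⟨fun r hr _ hx => append_mem_pTuples (hR₁ hr) hx, appendClass hR₁,
    ⟨appendClass_injective hR₁ hR_unique, appendClass_surjective hR₁ hR_exists⟩,
    fun _ _ _ => rfl⟩

/-- Given a set `R` of representatives for the orbits of `G` on `G_{n,p}`, the map sending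
(the class of) an `m`-tuple `x` in `C⟨g₁,…,gₙ⟩_{m,p}` (for `(g₁,…,gₙ) ∈ R`) to the
`G`-conjugacy class of `(x₁,…,xₘ,g₁,…,gₙ)` is well defined and bijective onto
`G \ G_{m+n,p}`. -/
theorem orbit_decomposition_of_tuples {G : Type*} [Group G] (p m n : ℕ) (hp : p.Prime)
    (hm : 1 ≤ m) (hn : 1 ≤ n) (R : Set (Fin n → G)) (hR₁ : R ⊆ pTuples G p n)
    (hR₂ : ∀ v ∈ pTuples G p n, ∃! r, r ∈ R ∧ ∃ g : G, ∀ i, g * r i * g⁻¹ = v i) :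
    (∀ (r : Fin n → G), r ∈ R → ∀ x : Fin m → tupleCentralizer r,
        x ∈ pTuples (tupleCentralizer r) p m →
        Fin.append (fun i => (x i : G)) r ∈ pTuples G p (m + n)) ∧
    ∃ f : ((r : R) × Quot (tupleConj (pTuples (tupleCentralizer r.1) p m))) →
        Quot (tupleConj (pTuples G p (m + n))),
      Function.Bijective f ∧
      ∀ (r : R) (x : pTuples (tupleCentralizer r.1) p m)
        (h : Fin.append (fun i => (x.1 i : G)) r.1 ∈ pTuples G p (m + n)),
        f ⟨r, Quot.mk _ x⟩ = Quot.mk _ ⟨Fin.append (fun i => (x.1 i : G)) r.1, h⟩ :=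
  orbit_decomposition_of_tuples_general p m n R hR₁ hR₂
end

section
/- Let G be a group, H a subgroup of G, and K a finite subgroup of G. Consider the left translation action of the centralizer C_G(H) on the set (G/K)^H of left cosets gK that are fixed by H (i.e. HgK = gK elementwise, equivalently g⁻¹Hg ≤ K). Then this action has only finitely many orbits; indeed, the map sending the C_G(H)-orbit of gK to the K-conjugacy class of the injective homomorphism H → K given by h ↦ g⁻¹hg is well defined and injective, and its target is finite. -/
/-!
An `H`-fixed coset `gK` gives the injective homomorphism `h ↦ g⁻¹hg` from `H` to `K`.
Two fixed cosets `g₁K`, `g₂K` give `K`-conjugate homomorphisms, say by `k`, exactly when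
`c = g₂kg₁⁻¹` centralizes `H`, and then `c • g₁K = g₂K`; so `C_G(H)`-orbits embed into
`K`-conjugacy classes of embeddings `H ↪ K`, of which there are finitely many because `K` is
finite.
-/

/-- The set `(G/K)^H` of left cosets fixed by every element of `H`. -/
def fixedCosets {G : Type*} [Group G] (H K : Subgroup G) : Set (G ⧸ K) :=
  {x | ∀ h : H, (h : G) • x = x}

/-- Translation relation on `(G/K)^H` by the centralizer of `H`. -/
def centralizerOrbitRel {G : Type*} [Group G] (H K : Subgroup G)
    (a b : fixedCosets H K) : Prop :=
  ∃ c ∈ Subgroup.centralizer (H : Set G), c • a.1 = b.1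

/-- `K`-conjugacy relation on injective homomorphisms `H →* K`. -/
def conjHomRel {G : Type*} [Group G] (H K : Subgroup G)
    (φ ψ : {φ : H →* K // Function.Injective φ}) : Prop :=
  ∃ k : K, ∀ h : H, ψ.1 h = k * φ.1 h * k⁻¹

theorem finite_injective_monoidHom {M N : Type*} [MulOneClass M] [MulOneClass N] [Finite N] :
    Finite {φ : M →* N // Function.Injective φ} :=
  Finite.of_injective (fun φ => (⟨φ.1, φ.2⟩ : M ↪ N))
    fun _ _ h => Subtype.ext (DFunLike.coe_injective (congrArg (fun e : M ↪ N => ⇑e) h))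

section

variable {G : Type*} [Group G] {H K : Subgroup G}

theorem mk_mem_fixedCosets_iff (g : G) :
    (g : G ⧸ K) ∈ fixedCosets H K ↔ ∀ h ∈ H, g⁻¹ * h * g ∈ K := by
  simp only [fixedCosets, Set.mem_ofPred_eq, MulAction.Quotient.smul_mk, smul_eq_mul,
    QuotientGroup.eq, Subtype.forall]
  refine forall₂_congr fun h _ => ⟨fun hh => ?_, fun hh => ?_⟩
  · simpa [mul_assoc] using K.inv_mem hh
  · simpa [mul_assoc] using K.inv_mem hh

theorem mem_fixedCosets_iff (x : G ⧸ K) :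
    x ∈ fixedCosets H K ↔ ∃ g : G, x = g ∧ ∀ h ∈ H, g⁻¹ * h * g ∈ K := by
  obtain ⟨g, rfl⟩ := QuotientGroup.mk_surjective x
  refine ⟨fun hg => ⟨g, rfl, (mk_mem_fixedCosets_iff g).1 hg⟩, ?_⟩
  rintro ⟨g', hgg', hg'⟩
  rw [hgg']
  exact (mk_mem_fixedCosets_iff g').2 hg'

theorem out_conj_mem_of_mem_fixedCosets (x : fixedCosets H K) :
    ∀ h ∈ H, x.1.out⁻¹ * h * x.1.out ∈ K :=
  (mk_mem_fixedCosets_iff _).1 ((QuotientGroup.out_eq' x.1).symm ▸ x.2)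

def conjHom (g : G) (hg : ∀ h ∈ H, g⁻¹ * h * g ∈ K) : H →* K where
  toFun h := ⟨g⁻¹ * h * g, hg h h.2⟩
  map_one' := by ext; simp
  map_mul' _ _ := by ext; simp only [Subgroup.coe_mul]; group

theorem conjHom_injective (g : G) (hg : ∀ h ∈ H, g⁻¹ * h * g ∈ K) :
    Function.Injective (conjHom g hg) := fun _ _ hab =>
  Subtype.ext (mul_left_cancel (mul_right_cancel (congrArg Subtype.val hab)))

theorem conjHomRel_equivalence : Equivalence (conjHomRel H K) where
  refl _ := ⟨1, by simp⟩
  symm := fun ⟨k, hk⟩ => ⟨k⁻¹, fun h => by rw [hk h]; group⟩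
  trans := fun ⟨k, hk⟩ ⟨l, hl⟩ => ⟨l * k, fun h => by rw [hl h, hk h]; group⟩

theorem conjHomRel_conjHom_iff {g₁ g₂ : G} (hg₁ : ∀ h ∈ H, g₁⁻¹ * h * g₁ ∈ K)
    (hg₂ : ∀ h ∈ H, g₂⁻¹ * h * g₂ ∈ K) :
    conjHomRel H K ⟨conjHom g₁ hg₁, conjHom_injective g₁ hg₁⟩
        ⟨conjHom g₂ hg₂, conjHom_injective g₂ hg₂⟩ ↔
      ∃ c ∈ Subgroup.centralizer (H : Set G), c • (g₁ : G ⧸ K) = g₂ := by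
  constructor
  · rintro ⟨k, hk⟩
    refine ⟨g₂ * k * g₁⁻¹, Subgroup.mem_centralizer_iff.2 fun h hh => ?_, ?_⟩
    · have hconj : g₂⁻¹ * h * g₂ = k * (g₁⁻¹ * h * g₁) * (k : G)⁻¹ :=
        congrArg Subtype.val (hk ⟨h, hh⟩)
      calc h * (g₂ * k * g₁⁻¹) = g₂ * (g₂⁻¹ * h * g₂) * k * g₁⁻¹ := by group
        _ = g₂ * k * g₁⁻¹ * h := by rw [hconj]; group
    · rw [MulAction.Quotient.smul_mk, smul_eq_mul, inv_mul_cancel_right]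
      exact QuotientGroup.mk_mul_of_mem g₂ k.2
  · rintro ⟨c, hc, hcg⟩
    rw [MulAction.Quotient.smul_mk, smul_eq_mul, QuotientGroup.eq] at hcg
    -- `g₂ = c g₁ k` with `k ∈ K`, and `c` commutes with `H`, so `k⁻¹` does the conjugating.
    refine ⟨⟨_, K.inv_mem hcg⟩, fun h => Subtype.ext ?_⟩
    have hch : c⁻¹ * h * c = h := by
      rw [mul_assoc, Subgroup.mem_centralizer_iff.1 hc h h.2, inv_mul_cancel_left]
    change g₂⁻¹ * h * g₂ = ((c * g₁)⁻¹ * g₂)⁻¹ * (g₁⁻¹ * h * g₁) * ((c * g₁)⁻¹ * g₂)⁻¹⁻¹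
    calc g₂⁻¹ * h * g₂ = g₂⁻¹ * c * g₁ * (g₁⁻¹ * (c⁻¹ * h * c) * g₁) * (g₁⁻¹ * c⁻¹ * g₂) := by
          group
      _ = _ := by rw [hch]; group

noncomputable def fixedCosetConjHom (x : fixedCosets H K) :
    {φ : H →* K // Function.Injective φ} :=
  ⟨conjHom x.1.out (out_conj_mem_of_mem_fixedCosets x), conjHom_injective _ _⟩

theorem conjHomRel_fixedCosetConjHom_iff (x y : fixedCosets H K) :
    conjHomRel H K (fixedCosetConjHom x) (fixedCosetConjHom y) ↔ centralizerOrbitRel H K x y := by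
  rw [fixedCosetConjHom, fixedCosetConjHom, conjHomRel_conjHom_iff, QuotientGroup.out_eq',
    QuotientGroup.out_eq']
  rfl

noncomputable def orbitToConjClass :
    Quot (centralizerOrbitRel H K) → Quot (conjHomRel H K) :=
  Quot.lift (fun x => Quot.mk _ (fixedCosetConjHom x))
    fun x y hxy => Quot.sound ((conjHomRel_fixedCosetConjHom_iff x y).2 hxy)

theorem orbitToConjClass_injective : Function.Injective (orbitToConjClass (H := H) (K := K)) := by
  rintro ⟨x⟩ ⟨y⟩ hxy
  have hrel := conjHomRel_equivalence.eqvGen_iff.1 (Quot.eqvGen_exact hxy)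
  exact Quot.sound ((conjHomRel_fixedCosetConjHom_iff x y).1 hrel)

theorem orbitToConjClass_mk (g : G) (hg : (g : G ⧸ K) ∈ fixedCosets H K) (φ : H →* K)
    (hφ : ∀ h : H, (φ h : G) = g⁻¹ * h * g) (hinj : Function.Injective φ) :
    orbitToConjClass (Quot.mk _ ⟨(g : G ⧸ K), hg⟩) = Quot.mk (conjHomRel H K) ⟨φ, hinj⟩ := by
  have hφg : φ = conjHom g ((mk_mem_fixedCosets_iff g).1 hg) :=
    MonoidHom.ext fun h => Subtype.ext (hφ h)
  subst hφg
  refine Quot.sound ((conjHomRel_conjHom_iff _ _).2 ⟨1, Subgroup.one_mem _, ?_⟩)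
  rw [one_smul, QuotientGroup.out_eq']

end

/-- Let `H` be a subgroup and `K` a finite subgroup of `G`. The left translation action of
the centralizer `C_G(H)` on the `H`-fixed cosets `(G/K)^H` has finitely many orbits:
every `H`-fixed coset `gK` yields an injective homomorphism `H → K`, `h ↦ g⁻¹hg`; the map
sending the `C_G(H)`-orbit of `gK` to the `K`-conjugacy class of this homomorphism is
well defined and injective, and its target is finite. -/
theorem finitely_many_centralizer_orbits_on_fixed_cosets {G : Type*} [Group G]
    (H K : Subgroup G) (hK : Finite K) :
    (∀ x : G ⧸ K, x ∈ fixedCosets H K ↔ ∃ g : G, x = QuotientGroup.mk g ∧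
        ∀ h ∈ H, g⁻¹ * h * g ∈ K) ∧
    (∀ g : G, QuotientGroup.mk g ∈ fixedCosets H K →
      ∃ φ : H →* K, (∀ h : H, (φ h : G) = g⁻¹ * h * g) ∧ Function.Injective φ) ∧
    Finite (Quot (conjHomRel H K)) ∧
    (∃ f : Quot (centralizerOrbitRel H K) → Quot (conjHomRel H K),
      Function.Injective f ∧
      ∀ (g : G) (hg : QuotientGroup.mk g ∈ fixedCosets H K)
        (φ : H →* K) (hφ : ∀ h : H, (φ h : G) = g⁻¹ * h * g)
        (hinj : Function.Injective φ),
        f (Quot.mk _ ⟨QuotientGroup.mk g, hg⟩) = Quot.mk _ ⟨φ, hinj⟩) ∧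
    Finite (Quot (centralizerOrbitRel H K)) := by
  have hfinite : Finite (Quot (conjHomRel H K)) :=
    haveI := finite_injective_monoidHom (M := H) (N := K)
    Finite.of_surjective _ Quot.mk_surjective
  refine ⟨mem_fixedCosets_iff, fun g hg => ?_, hfinite,
    ⟨orbitToConjClass, orbitToConjClass_injective, orbitToConjClass_mk⟩,
    Finite.of_injective _ orbitToConjClass_injective⟩
  have hconj := (mk_mem_fixedCosets_iff g).1 hg
  exact ⟨conjHom g hconj, fun _ => rfl, conjHom_injective g hconj⟩
end

section
/- Every element of order 3 in SL_3(ℤ) has finite centralizer; that is, for every matrix g in the special linear group of 3×3 integer matrices with g of order 3, the centralizer subgroup {x ∈ SL_3(ℤ) : xg = gx} is finite. -/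
/-!
An element `g` of order 3 in `SL₃(ℤ)` is a rotation by a third of a turn: it fixes a nonzero
integral vector `u` (a column of `1 + g + g²`, which is nonzero because `(g - 1)² = -3g` would
force `det (g - 1) ^ 2 = -27`), and the plane `ker (1 + g + g²)` contains a nonzero integral `w`
(a column of `1 - g`); `u, w, g w` is a basis of `ℚ³`. A matrix `x` commuting with `g` preserves
the axis and the plane, so it is determined by `x u` and `x w`. Take the `g`-invariant form
`Q v = |v|² + |g v|² + |g² v|²`. On the axis `x` scales `Q` by some `α²`; on the plane, where `g`
acts as `ω = e^(2πi/3)`, `x` acts as some `a + bω` and scales `Q` by its norm `a² - ab + b²`.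
Hence `Q (x v) * Q (x⁻¹ v) = Q v ^ 2` for `v = u, w`, and as `Q ≥ 1` on nonzero integral vectors,
`|x v|² ≤ Q (x v) ≤ Q v ^ 2`: the centralizer injects into a finite set of pairs of integral
vectors.
-/

open Matrix

section

variable {R : Type*} [CommRing R] {n : Type*} [Fintype n]

theorem exists_mulVec_ne_zero {M : Matrix n n R} (hM : M ≠ 0) : ∃ v, M *ᵥ v ≠ 0 := by
  by_contra! h
  exact hM (ext_iff_mulVec.2 fun v => by rw [h v, zero_mulVec])

theorem mulVec_mulVec_eq_zero_of_commute {M X : Matrix n n R} (h : Commute M X) {y : n → R}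
    (hy : M *ᵥ y = 0) : M *ᵥ (X *ᵥ y) = 0 := by
  rw [mulVec_mulVec, h.eq, ← mulVec_mulVec, hy, mulVec_zero]

theorem RingHom.mapMatrix_mulVec_comp {S : Type*} [CommRing S] [DecidableEq n] (f : R →+* S)
    (M : Matrix n n R) (v : n → R) : f.mapMatrix M *ᵥ (f ∘ v) = f ∘ (M *ᵥ v) :=
  funext fun i => (f.map_mulVec M v i).symm

theorem dotProduct_self_nonneg [LinearOrder R] [IsStrictOrderedRing R] (v : n → R) :
    0 ≤ v ⬝ᵥ v :=
  Finset.sum_nonneg fun i _ => mul_self_nonneg (v i)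

variable [DecidableEq n] {g : Matrix n n R}

theorem commute_one_add_add_sq_left {X : Matrix n n R} (h : Commute g X) :
    Commute (1 + g + g ^ 2) X :=
  ((Commute.one_left X).add_left h).add_left (h.pow_left 2)

theorem mulVec_mulVec_eq_neg_sub {w : n → R} (hw : (1 + g + g ^ 2) *ᵥ w = 0) :
    g *ᵥ (g *ᵥ w) = -w - g *ᵥ w := by
  rw [add_mulVec, add_mulVec, one_mulVec, sq, ← mulVec_mulVec] at hw
  rw [eq_sub_iff_add_eq, eq_neg_iff_add_eq_zero, ← hw]
  abel

theorem one_add_add_sq_mulVec_of_mulVec_eq_self {u : n → R} (hu : g *ᵥ u = u) :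
    (1 + g + g ^ 2) *ᵥ u = (3 : R) • u := by
  rw [add_mulVec, add_mulVec, one_mulVec, sq, ← mulVec_mulVec, hu, hu]
  module

theorem one_add_add_sq_ne_zero [LinearOrder R] [IsStrictOrderedRing R]
    (hn : Odd (Fintype.card n)) (hdet : 0 < g.det) : 1 + g + g ^ 2 ≠ 0 := by
  intro h
  have hsq : (g - 1) ^ 2 = (-3 : R) • g := by
    rw [show (-3 : R) • g = -(g + g + g) by module, ← sub_eq_zero, ← h]
    noncomm_ring
  have hdet_sq := congrArg det hsq
  rw [det_pow, det_smul] at hdet_sq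
  nlinarith [sq_nonneg (g - 1).det, hn.pow_neg (show (-3 : R) < 0 by norm_num)]

end

def orbitForm {R : Type*} [CommRing R] {n : Type*} [Fintype n] [DecidableEq n]
    (g : Matrix n n R) : LinearMap.BilinForm R (n → R) :=
  toBilin' (∑ k ∈ Finset.range 3, (g ^ k)ᵀ * g ^ k)

section OrbitForm

variable {R : Type*} [CommRing R] {n : Type*} [Fintype n] [DecidableEq n] {g : Matrix n n R}

theorem orbitForm_apply (g : Matrix n n R) (v v' : n → R) :
    orbitForm g v v' = ∑ k ∈ Finset.range 3, (g ^ k *ᵥ v) ⬝ᵥ (g ^ k *ᵥ v') := by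
  simp only [orbitForm, toBilin'_apply', Matrix.sum_mulVec, dotProduct_sum, ← mulVec_mulVec,
    dotProduct_mulVec, vecMul_transpose]

theorem orbitForm_comm (v v' : n → R) : orbitForm g v v' = orbitForm g v' v := by
  simp only [orbitForm_apply, dotProduct_comm]

theorem orbitForm_mapMatrix {S : Type*} [CommRing S] (f : R →+* S) (g : Matrix n n R)
    (v v' : n → R) : orbitForm (f.mapMatrix g) (f ∘ v) (f ∘ v') = f (orbitForm g v v') := by
  simp only [orbitForm_apply, map_sum, RingHom.map_dotProduct, ← map_pow,
    RingHom.mapMatrix_mulVec_comp]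

theorem orbitForm_mulVec_mulVec (hg : g ^ 3 = 1) (v v' : n → R) :
    orbitForm g (g *ᵥ v) (g *ᵥ v') = orbitForm g v v' := by
  simp only [orbitForm_apply, Finset.sum_range_succ, Finset.sum_range_zero, mulVec_mulVec,
    ← pow_succ, hg]
  simp only [pow_zero, one_mulVec, zero_add, pow_one]
  ring

theorem dotProduct_self_le_orbitForm [LinearOrder R] [IsStrictOrderedRing R] (v : n → R) :
    v ⬝ᵥ v ≤ orbitForm g v v := by
  simp only [orbitForm_apply, Finset.sum_range_succ, Finset.sum_range_zero, pow_zero, one_mulVec,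
    zero_add, pow_one]
  linarith [dotProduct_self_nonneg (g *ᵥ v), dotProduct_self_nonneg (g ^ 2 *ᵥ v)]

variable (hg : g ^ 3 = 1) {w : n → R} (hw : (1 + g + g ^ 2) *ᵥ w = 0)
include hg hw

theorem two_mul_orbitForm_mulVec_right : 2 * orbitForm g w (g *ᵥ w) = -orbitForm g w w := by
  have h : orbitForm g (g *ᵥ (g *ᵥ w)) (g *ᵥ (g *ᵥ w)) = orbitForm g w w := by
    rw [orbitForm_mulVec_mulVec hg, orbitForm_mulVec_mulVec hg]
  rw [mulVec_mulVec_eq_neg_sub hw] at h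
  simp only [map_sub, map_neg, LinearMap.sub_apply, LinearMap.neg_apply,
    orbitForm_comm (g *ᵥ w) w, orbitForm_mulVec_mulVec hg] at h
  linear_combination h

theorem orbitForm_smul_add_smul_mulVec [IsDomain R] [NeZero (2 : R)] (a b : R) :
    orbitForm g (a • w + b • g *ᵥ w) (a • w + b • g *ᵥ w) =
      (a ^ 2 - a * b + b ^ 2) * orbitForm g w w := by
  apply mul_left_cancel₀ (two_ne_zero (α := R))
  simp only [map_add, map_smul, LinearMap.add_apply, LinearMap.smul_apply, smul_eq_mul,
    orbitForm_comm (g *ᵥ w) w, orbitForm_mulVec_mulVec hg]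
  linear_combination (2 * a * b) * two_mul_orbitForm_mulVec_right hg hw

end OrbitForm

theorem sq_eq_mul_of_forall_eq_mul {V R : Type*} [CommRing R] {Q : V → R} {p : V → Prop}
    {f f' : V → V} {c : R} (hf : ∀ y, p y → Q (f y) = c * Q y) (hf' : ∀ y, p y → p (f' y))
    (hff' : ∀ y, f (f' y) = y) {y : V} (hy : p y) : Q y ^ 2 = Q (f y) * Q (f' y) := by
  calc Q y ^ 2 = Q (f (f' y)) * Q y := by rw [hff', sq]
    _ = Q (f y) * Q (f' y) := by rw [hf _ (hf' y hy), hf y hy]; ring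

/-- For `G` of order 3, `u` lies on the axis and `w` in the plane of the rotation `G`. -/
structure IsRotationFrame {R : Type*} [CommRing R] {n : Type*} [Fintype n] [DecidableEq n]
    (G : Matrix n n R) (u w : n → R) : Prop where
  ne_zero_axis : u ≠ 0
  mulVec_axis : G *ᵥ u = u
  ne_zero_plane : w ≠ 0
  mulVec_plane : (1 + G + G ^ 2) *ᵥ w = 0

theorem IsRotationFrame.mapMatrix {R S : Type*} [CommRing R] [CommRing S] {n : Type*}
    [Fintype n] [DecidableEq n] {G : Matrix n n R} {u w : n → R} (hF : IsRotationFrame G u w)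
    {f : R →+* S} (hf : Function.Injective f) :
    IsRotationFrame (f.mapMatrix G) (f ∘ u) (f ∘ w) where
  ne_zero_axis := fun h => hF.ne_zero_axis (hf.comp_left (by simpa using h))
  mulVec_axis := by rw [RingHom.mapMatrix_mulVec_comp, hF.mulVec_axis]
  ne_zero_plane := fun h => hF.ne_zero_plane (hf.comp_left (by simpa using h))
  mulVec_plane := by
    rw [← map_pow, ← map_one f.mapMatrix, ← map_add, ← map_add,
      RingHom.mapMatrix_mulVec_comp, hF.mulVec_plane]
    simp

theorem exists_isRotationFrame {R : Type*} [CommRing R] [LinearOrder R] [IsStrictOrderedRing R]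
    {n : Type*} [Fintype n] [DecidableEq n] {g : Matrix n n R} (hn : Odd (Fintype.card n))
    (hg : g ^ 3 = 1) (hg1 : g ≠ 1) (hdet : 0 < g.det) : ∃ u w, IsRotationFrame g u w := by
  obtain ⟨v, hv⟩ := exists_mulVec_ne_zero (one_add_add_sq_ne_zero hn hdet)
  obtain ⟨v', hv'⟩ := exists_mulVec_ne_zero (sub_ne_zero.2 hg1.symm)
  refine ⟨_, _, ⟨hv, ?_, hv', ?_⟩⟩
  · rw [mulVec_mulVec, show g * (1 + g + g ^ 2) = g ^ 3 + g + g ^ 2 by noncomm_ring, hg]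
  · rw [mulVec_mulVec, show (1 + g + g ^ 2) * (1 - g) = 1 - g ^ 3 by noncomm_ring, hg, sub_self,
      zero_mulVec]

section Frame

variable {K : Type*} [Field K] [LinearOrder K] [IsStrictOrderedRing K]
  {n : Type*} [Fintype n] [DecidableEq n] {G : Matrix n n K}

theorem linearIndependent_pair_mulVec {w : n → K} (hw0 : w ≠ 0)
    (hw : (1 + G + G ^ 2) *ᵥ w = 0) : LinearIndependent K ![w, G *ᵥ w] := by
  refine LinearIndependent.pair_iff.2 fun s t hst => ?_
  have hG : s • G *ᵥ w + t • G *ᵥ (G *ᵥ w) = 0 := by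
    simpa only [mulVec_add, mulVec_smul, mulVec_zero] using congrArg (G *ᵥ ·) hst
  rw [mulVec_mulVec_eq_neg_sub hw] at hG
  have hnorm : (s ^ 2 - s * t + t ^ 2) • w = 0 := by
    linear_combination (norm := module) (s - t) • hst - t • hG
  have hzero : s ^ 2 - s * t + t ^ 2 = 0 := (smul_eq_zero.1 hnorm).resolve_right hw0
  constructor <;> nlinarith [sq_nonneg (s - t), sq_nonneg s, sq_nonneg t]

theorem IsRotationFrame.linearIndependent {u w : n → K} (hF : IsRotationFrame G u w) :
    LinearIndependent K ![u, w, G *ᵥ w] := by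
  obtain ⟨hu0, hu, hw0, hw⟩ := hF
  refine Fintype.linearIndependent_iff.2 fun c hc => ?_
  simp only [Fin.sum_univ_three, Matrix.cons_val_zero, Matrix.cons_val_one, Matrix.cons_val_two,
    Matrix.head_cons, Matrix.tail_cons] at hc
  have hGw := mulVec_mulVec_eq_zero_of_commute (commute_one_add_add_sq_left (Commute.refl G)) hw
  have hc0 : c 0 = 0 := by
    have h := congrArg ((1 + G + G ^ 2) *ᵥ ·) hc
    simp only [mulVec_add, mulVec_smul, one_add_add_sq_mulVec_of_mulVec_eq_self hu, hw, hGw,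
      smul_zero, add_zero, mulVec_zero, smul_smul] at h
    simpa using (smul_eq_zero.1 h).resolve_right hu0
  rw [hc0, zero_smul, zero_add] at hc
  obtain ⟨hc1, hc2⟩ := (LinearIndependent.pair_iff (x := w) (y := G *ᵥ w)).1
    (linearIndependent_pair_mulVec hw0 hw) _ _ hc
  intro i
  fin_cases i <;> assumption

namespace IsRotationFrame

variable {G : Matrix (Fin 3) (Fin 3) K} {u w : Fin 3 → K} (hF : IsRotationFrame G u w)
include hF

theorem exists_smul_add_smul_add_smul_eq (y : Fin 3 → K) :
    ∃ a b c : K, a • u + b • w + c • G *ᵥ w = y := by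
  have hspan := hF.linearIndependent.span_eq_top_of_card_eq_finrank (by simp)
  have hy : y ∈ Submodule.span K (Set.range ![u, w, G *ᵥ w]) := hspan ▸ Submodule.mem_top
  obtain ⟨c, hc⟩ := (Submodule.mem_span_range_iff_exists_fun K).1 hy
  exact ⟨c 0, c 1, c 2, by simpa [Fin.sum_univ_three] using hc⟩

theorem exists_smul_eq_of_mulVec_eq_self {y : Fin 3 → K} (hy : G *ᵥ y = y) :
    ∃ a : K, a • u = y := by
  obtain ⟨a, b, c, rfl⟩ := exists_smul_add_smul_add_smul_eq hF y
  simp only [mulVec_add, mulVec_smul, hF.mulVec_axis, mulVec_mulVec_eq_neg_sub hF.mulVec_plane]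
    at hy
  have hbc : (-b - c) • w + (b - 2 * c) • G *ᵥ w = 0 := by
    linear_combination (norm := module) hy
  obtain ⟨hb, hc⟩ := (LinearIndependent.pair_iff (x := w) (y := G *ᵥ w)).1
    (linearIndependent_pair_mulVec hF.ne_zero_plane hF.mulVec_plane) _ _ hbc
  refine ⟨a, ?_⟩
  rw [show b = 0 by linarith, show c = 0 by linarith]
  simp

theorem exists_smul_add_smul_eq_of_mulVec_eq_zero {y : Fin 3 → K}
    (hy : (1 + G + G ^ 2) *ᵥ y = 0) : ∃ a b : K, a • w + b • G *ᵥ w = y := by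
  obtain ⟨a, b, c, rfl⟩ := exists_smul_add_smul_add_smul_eq hF y
  have hGw := mulVec_mulVec_eq_zero_of_commute (commute_one_add_add_sq_left (Commute.refl G))
    hF.mulVec_plane
  simp only [mulVec_add, mulVec_smul, one_add_add_sq_mulVec_of_mulVec_eq_self hF.mulVec_axis,
    hF.mulVec_plane, hGw, smul_zero, add_zero, smul_smul, smul_eq_zero, mul_eq_zero,
    hF.ne_zero_axis, or_false] at hy
  refine ⟨b, c, ?_⟩
  rw [hy.resolve_right three_ne_zero, zero_smul, zero_add]

theorem eq_of_commute_of_mulVec_eq {X Y : Matrix (Fin 3) (Fin 3) K} (hX : Commute G X)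
    (hY : Commute G Y) (hXu : X *ᵥ u = Y *ᵥ u) (hXw : X *ᵥ w = Y *ᵥ w) : X = Y := by
  refine ext_iff_mulVec.2 fun y => ?_
  obtain ⟨a, b, c, rfl⟩ := exists_smul_add_smul_add_smul_eq hF y
  simp only [mulVec_add, mulVec_smul, mulVec_mulVec, ← hX.eq, ← hY.eq]
  simp only [← mulVec_mulVec, hXu, hXw]

variable {X : Matrix (Fin 3) (Fin 3) K} (hX : Commute G X)
include hX

theorem exists_forall_orbitForm_mulVec_of_mulVec_eq_self :
    ∃ c : K, ∀ y, G *ᵥ y = y → orbitForm G (X *ᵥ y) (X *ᵥ y) = c * orbitForm G y y := by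
  obtain ⟨α, hα⟩ := exists_smul_eq_of_mulVec_eq_self hF (y := X *ᵥ u)
    (by rw [mulVec_mulVec, hX.eq, ← mulVec_mulVec, hF.mulVec_axis])
  refine ⟨α ^ 2, fun y hy => ?_⟩
  obtain ⟨a, rfl⟩ := exists_smul_eq_of_mulVec_eq_self hF hy
  simp only [mulVec_smul, ← hα, map_smul, LinearMap.smul_apply, smul_eq_mul]
  ring

theorem exists_forall_orbitForm_mulVec_of_mulVec_eq_zero (hG : G ^ 3 = 1) :
    ∃ c : K, ∀ y, (1 + G + G ^ 2) *ᵥ y = 0 →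
      orbitForm G (X *ᵥ y) (X *ᵥ y) = c * orbitForm G y y := by
  obtain ⟨a, b, hab⟩ := exists_smul_add_smul_eq_of_mulVec_eq_zero hF (y := X *ᵥ w)
    (mulVec_mulVec_eq_zero_of_commute (commute_one_add_add_sq_left hX) hF.mulVec_plane)
  refine ⟨a ^ 2 - a * b + b ^ 2, fun y hy => ?_⟩
  obtain ⟨c, d, rfl⟩ := exists_smul_add_smul_eq_of_mulVec_eq_zero hF hy
  have hXy : X *ᵥ (c • w + d • G *ᵥ w) =
      (c * a - d * b) • w + (c * b + d * a - d * b) • G *ᵥ w := by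
    rw [mulVec_add, mulVec_smul, mulVec_smul, mulVec_mulVec, ← hX.eq, ← mulVec_mulVec, ← hab]
    simp only [mulVec_add, mulVec_smul, mulVec_mulVec_eq_neg_sub hF.mulVec_plane]
    module
  rw [hXy, orbitForm_smul_add_smul_mulVec hG hF.mulVec_plane,
    orbitForm_smul_add_smul_mulVec hG hF.mulVec_plane]
  ring

theorem orbitForm_sq_eq_mul_of_commute (hG : G ^ 3 = 1) {Y : Matrix (Fin 3) (Fin 3) K}
    (hY : Commute G Y) (hXY : X * Y = 1) {y : Fin 3 → K}
    (hy : G *ᵥ y = y ∨ (1 + G + G ^ 2) *ᵥ y = 0) :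
    orbitForm G y y ^ 2 =
      orbitForm G (X *ᵥ y) (X *ᵥ y) * orbitForm G (Y *ᵥ y) (Y *ᵥ y) := by
  have hXY' (y : Fin 3 → K) : X *ᵥ (Y *ᵥ y) = y := by rw [mulVec_mulVec, hXY, one_mulVec]
  rcases hy with hy | hy
  · obtain ⟨c, hc⟩ := hF.exists_forall_orbitForm_mulVec_of_mulVec_eq_self hX
    exact sq_eq_mul_of_forall_eq_mul (Q := fun y => orbitForm G y y) hc
      (fun y hy => by rw [mulVec_mulVec, hY.eq, ← mulVec_mulVec, hy]) hXY' hy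
  · obtain ⟨c, hc⟩ := hF.exists_forall_orbitForm_mulVec_of_mulVec_eq_zero hX hG
    exact sq_eq_mul_of_forall_eq_mul (Q := fun y => orbitForm G y y) hc
      (fun y hy => mulVec_mulVec_eq_zero_of_commute (commute_one_add_add_sq_left hY) hy) hXY' hy

end IsRotationFrame

end Frame

theorem dotProduct_mulVec_self_le_of_sq_eq_mul {n : Type*} [Fintype n] [DecidableEq n]
    {g X Y : Matrix n n ℤ} (hXY : X * Y = 1) {y : n → ℤ} (hy : y ≠ 0)
    (h : orbitForm g y y ^ 2 =
      orbitForm g (X *ᵥ y) (X *ᵥ y) * orbitForm g (Y *ᵥ y) (Y *ᵥ y)) :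
    (X *ᵥ y) ⬝ᵥ (X *ᵥ y) ≤ orbitForm g y y ^ 2 := by
  have hYy : Y *ᵥ y ≠ 0 := fun h0 => hy (by
    rw [← one_mulVec y, ← hXY, ← mulVec_mulVec, h0, mulVec_zero])
  have hYy_pos : 0 < (Y *ᵥ y) ⬝ᵥ (Y *ᵥ y) :=
    (dotProduct_self_nonneg _).lt_of_ne (Ne.symm (dotProduct_self_eq_zero.not.2 hYy))
  nlinarith [dotProduct_self_nonneg (X *ᵥ y), dotProduct_self_le_orbitForm (g := g) (X *ᵥ y),
    dotProduct_self_le_orbitForm (g := g) (Y *ᵥ y)]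

namespace IsRotationFrame

variable {g X Y : Matrix (Fin 3) (Fin 3) ℤ} {u w : Fin 3 → ℤ} (hF : IsRotationFrame g u w)
  (hX : Commute g X) (hY : Commute g Y)
include hF hX hY

theorem int_eq_of_commute_of_mulVec_eq (hXu : X *ᵥ u = Y *ᵥ u) (hXw : X *ᵥ w = Y *ᵥ w) :
    X = Y := by
  let f := Int.castRingHom ℚ
  have hf : Function.Injective (f.mapMatrix : Matrix (Fin 3) (Fin 3) ℤ → _) :=
    map_injective Int.cast_injective
  refine hf ((hF.mapMatrix Int.cast_injective).eq_of_commute_of_mulVec_eq (hX.map _) (hY.map _)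
    ?_ ?_)
  · rw [RingHom.mapMatrix_mulVec_comp, RingHom.mapMatrix_mulVec_comp, hXu]
  · rw [RingHom.mapMatrix_mulVec_comp, RingHom.mapMatrix_mulVec_comp, hXw]

theorem int_dotProduct_mulVec_self_le (hg : g ^ 3 = 1) (hXY : X * Y = 1) :
    (X *ᵥ u) ⬝ᵥ (X *ᵥ u) ≤ orbitForm g u u ^ 2 ∧
      (X *ᵥ w) ⬝ᵥ (X *ᵥ w) ≤ orbitForm g w w ^ 2 := by
  let f := Int.castRingHom ℚ
  have hF' := hF.mapMatrix (f := f) Int.cast_injective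
  have hg' : f.mapMatrix g ^ 3 = 1 := by rw [← map_pow, hg, map_one]
  have hXY' : f.mapMatrix X * f.mapMatrix Y = 1 := by rw [← map_mul, hXY, map_one]
  have hu := hF'.orbitForm_sq_eq_mul_of_commute (hX.map _) hg' (hY.map _) hXY'
    (.inl hF'.mulVec_axis)
  have hw := hF'.orbitForm_sq_eq_mul_of_commute (hX.map _) hg' (hY.map _) hXY'
    (.inr hF'.mulVec_plane)
  simp only [RingHom.mapMatrix_mulVec_comp, orbitForm_mapMatrix, ← map_pow, ← map_mul] at hu hw
  exact ⟨dotProduct_mulVec_self_le_of_sq_eq_mul hXY hF.ne_zero_axis (f.injective_int hu),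
    dotProduct_mulVec_self_le_of_sq_eq_mul hXY hF.ne_zero_plane (f.injective_int hw)⟩

end IsRotationFrame

theorem finite_setOf_dotProduct_self_le {n : Type*} [Fintype n] [DecidableEq n] (N : ℤ) :
    {z : n → ℤ | z ⬝ᵥ z ≤ N}.Finite := by
  refine (Set.finite_Icc (fun _ => -N) fun _ => N).subset fun z hz => ?_
  have hi (i : n) : z i * z i ≤ N :=
    (Finset.single_le_sum (f := fun j => z j * z j) (fun j _ => mul_self_nonneg (z j))
      (Finset.mem_univ i)).trans hz
  exact ⟨fun i => show -N ≤ z i by nlinarith [hi i],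
    fun i => show z i ≤ N by nlinarith [hi i]⟩

/-- Every element of order 3 in `SL₃(ℤ)` has finite centralizer. -/
theorem centralizer_finite_of_orderOf_eq_three
    (g : Matrix.SpecialLinearGroup (Fin 3) ℤ) (hg : orderOf g = 3) :
    Finite (Subgroup.centralizer ({g} : Set (Matrix.SpecialLinearGroup (Fin 3) ℤ))) := by
  let coe := SpecialLinearGroup.coeMonoidHom (ι := Fin 3) (R := ℤ)
  let ι := coe.comp (Subgroup.centralizer {g}).subtype
  have hg3 : coe g ^ 3 = 1 := by
    rw [← map_pow, orderOf_dvd_iff_pow_eq_one.1 (dvd_of_eq hg), map_one]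
  have hg1 : coe g ≠ 1 := fun h => by
    simp [show g = 1 from SpecialLinearGroup.coeMonoidHom_injective h] at hg
  obtain ⟨u, w, hF⟩ := exists_isRotationFrame (by decide) hg3 hg1 (by simp [coe])
  have hcomm (x : Subgroup.centralizer {g}) : Commute (coe g) (ι x) :=
    (show Commute g x from (Subgroup.mem_centralizer_singleton_iff.1 x.2).symm).map coe
  have hbound (x : Subgroup.centralizer {g}) :=
    hF.int_dotProduct_mulVec_self_le (hcomm x) (hcomm x⁻¹) hg3
      (by rw [← map_mul, mul_inv_cancel, map_one])
  let ball (v : Fin 3 → ℤ) : Set (Fin 3 → ℤ) :=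
    {z | z ⬝ᵥ z ≤ orbitForm (coe g) v v ^ 2}
  have (v : Fin 3 → ℤ) : Finite (ball v) := (finite_setOf_dotProduct_self_le _).to_subtype
  refine Finite.of_injective
    (fun x => ((⟨_, (hbound x).1⟩ : ball u), (⟨_, (hbound x).2⟩ : ball w)))
    fun x y hxy => ?_
  simp only [Prod.mk.injEq, Subtype.mk.injEq] at hxy
  exact (SpecialLinearGroup.coeMonoidHom_injective.comp Subtype.val_injective)
    (hF.int_eq_of_commute_of_mulVec_eq (hcomm x) (hcomm y) hxy.1 hxy.2)
end

section
/- In SL_2(ℤ), the centralizer of the order-3 matrix A' = [[0,−1],[1,−1]] is the cyclic subgroup generated by the matrix M = [[1,−1],[1,0]], and M has order 6. -/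
/-- The matrix `A' = [[0,−1],[1,−1]]` as an element of `SL₂(ℤ)`. -/
def Aprime : Matrix.SpecialLinearGroup (Fin 2) ℤ :=
  ⟨!![0, -1; 1, -1], by norm_num [Matrix.det_fin_two_of]⟩

/-- The matrix `M = [[1,−1],[1,0]]` as an element of `SL₂(ℤ)`. -/
def Mmat : Matrix.SpecialLinearGroup (Fin 2) ℤ :=
  ⟨!![1, -1; 1, 0], by norm_num [Matrix.det_fin_two_of]⟩

/-! `M = 1 + A'` is a primitive sixth root of unity in `ℤ[A'] ≅ ℤ[ω]`, and its square is `A'`.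
A matrix commuting with `A'` is `a - b A' = [[a, b], [-b, a + b]]`, whose determinant is the
Eisenstein norm `a² + ab + b²`. Norm one leaves the six units `(a, b)`, which are the first rows
of `M⁰, …, M⁵`. -/

open MatrixGroups

theorem Int.sq_add_mul_add_sq_eq_one {a b : ℤ} (h : a ^ 2 + a * b + b ^ 2 = 1) :
    (a = 1 ∧ b = 0) ∨ (a = 1 ∧ b = -1) ∨ (a = 0 ∧ b = -1) ∨
      (a = -1 ∧ b = 0) ∨ (a = -1 ∧ b = 1) ∨ (a = 0 ∧ b = 1) := by
  -- `4 (a² + ab + b²) = (a + 2b)² + 3a² = (2a + b)² + 3b²`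
  have ha : a * a ≤ 1 := by nlinarith [sq_nonneg (a + 2 * b)]
  have hb : b * b ≤ 1 := by nlinarith [sq_nonneg (2 * a + b)]
  obtain ⟨ha₁, ha₂⟩ := abs_le.1 (abs_le_one_iff_mul_self_le_one.2 ha)
  obtain ⟨hb₁, hb₂⟩ := abs_le.1 (abs_le_one_iff_mul_self_le_one.2 hb)
  interval_cases a <;> interval_cases b <;> simp_all

theorem Mmat_sq : Mmat ^ 2 = Aprime := by decide

theorem orderOf_Mmat : orderOf Mmat = 6 := by
  have h6 : orderOf Mmat ∣ 6 := orderOf_dvd_iff_pow_eq_one.2 (by decide)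
  have h2 : ¬ orderOf Mmat ∣ 2 := by rw [orderOf_dvd_iff_pow_eq_one]; decide
  have h3 : ¬ orderOf Mmat ∣ 3 := by rw [orderOf_dvd_iff_pow_eq_one]; decide
  have hle := Nat.le_of_dvd (by norm_num) h6
  interval_cases orderOf Mmat <;> simp_all

theorem orderOf_Aprime : orderOf Aprime = 3 := by
  rw [← Mmat_sq, orderOf_pow' _ two_ne_zero, orderOf_Mmat]
  rfl

theorem entries_of_commute_Aprime {x : SL(2, ℤ)} (h : Commute x Aprime) :
    x 1 0 = -x 0 1 ∧ x 1 1 = x 0 0 + x 0 1 := by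
  have hm : (x : Matrix (Fin 2) (Fin 2) ℤ) * Aprime = Aprime * x := congrArg Subtype.val h.eq
  have e00 : x 0 1 = -x 1 0 := by
    simpa [Aprime, Matrix.mul_apply] using congrFun (congrFun hm 0) 0
  have e01 : -x 0 0 + -x 0 1 = -x 1 1 := by
    simpa [Aprime, Matrix.mul_apply] using congrFun (congrFun hm 0) 1
  omega

theorem eq_of_commute_Aprime {x y : SL(2, ℤ)} (hx : Commute x Aprime) (hy : Commute y Aprime)
    (h₀ : x 0 0 = y 0 0) (h₁ : x 0 1 = y 0 1) : x = y := by
  obtain ⟨hx₁, hx₂⟩ := entries_of_commute_Aprime hx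
  obtain ⟨hy₁, hy₂⟩ := entries_of_commute_Aprime hy
  ext i j
  fin_cases i <;> fin_cases j <;> simp [*]

theorem mem_zpowers_Mmat_of_commute {x : SL(2, ℤ)} (h : Commute x Aprime) :
    x ∈ Subgroup.zpowers Mmat := by
  have hnorm : x 0 0 ^ 2 + x 0 0 * x 0 1 + x 0 1 ^ 2 = 1 := by
    obtain ⟨h₁, h₂⟩ := entries_of_commute_Aprime h
    have hdet := x.2
    rw [Matrix.det_fin_two, h₁, h₂] at hdet
    linear_combination hdet
  suffices ∃ k : ℕ, (Mmat ^ k) 0 0 = x 0 0 ∧ (Mmat ^ k) 0 1 = x 0 1 by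
    obtain ⟨k, h₀, h₁⟩ := this
    have hk : Commute (Mmat ^ k) Aprime := Mmat_sq ▸ (Commute.pow_self Mmat k).pow_right 2
    exact eq_of_commute_Aprime hk h h₀ h₁ ▸ Subgroup.npow_mem_zpowers Mmat k
  rcases Int.sq_add_mul_add_sq_eq_one hnorm with
    ⟨ha, hb⟩ | ⟨ha, hb⟩ | ⟨ha, hb⟩ | ⟨ha, hb⟩ | ⟨ha, hb⟩ | ⟨ha, hb⟩ <;> rw [ha, hb]
  exacts [⟨0, by decide⟩, ⟨1, by decide⟩, ⟨2, by decide⟩, ⟨3, by decide⟩, ⟨4, by decide⟩,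
    ⟨5, by decide⟩]

/-- In `SL₂(ℤ)`, the matrix `A'` has order 3, its centralizer is the cyclic subgroup
generated by `M`, and `M` has order 6. -/
theorem centralizer_of_Aprime :
    orderOf Aprime = 3 ∧
    Subgroup.centralizer ({Aprime} : Set (Matrix.SpecialLinearGroup (Fin 2) ℤ)) =
      Subgroup.zpowers Mmat ∧
    orderOf Mmat = 6 := by
  refine ⟨orderOf_Aprime, le_antisymm (fun x hx => ?_) ?_, orderOf_Mmat⟩
  · exact mem_zpowers_Mmat_of_commute (Subgroup.mem_centralizer_singleton_iff.1 hx)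
  · rw [Subgroup.zpowers_le, Subgroup.mem_centralizer_singleton_iff, ← Mmat_sq]
    exact (Commute.self_pow Mmat 2).eq
end

section
/- Let n ≥ 1 and let S_3 be the symmetric group on 3 letters. Then twice the number of orbits of the simultaneous conjugation action of S_3 on the set (S_3)_{n,3} of n-tuples of pairwise commuting 3-power order elements equals 3ⁿ + 1; that is, |S_3 \ (S_3)_{n,3}| = (3ⁿ − 1)/2 + 1. -/
open MulAction Equiv

section Conjugation

variable {G : Type*} [Group G] {p n : ℕ}

theorem comp_mem_pTuples {H : Type*} [Group H] (f : G →* H) (hf : Function.Injective f)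
    {v : Fin n → G} (hv : v ∈ pTuples G p n) : f ∘ v ∈ pTuples H p n :=
  ⟨fun i j => (hv.1 i j).map f, fun i => by simpa [orderOf_injective f hf] using hv.2 i⟩

theorem conj_mem_pTuples (g : G) {v : Fin n → G} (hv : v ∈ pTuples G p n) :
    (fun i => g * v i * g⁻¹) ∈ pTuples G p n :=
  comp_mem_pTuples (MulAut.conj g).toMonoidHom (MulAut.conj g).injective hv

instance : MulAction G (pTuples G p n) where
  smul g v := ⟨fun i => g * v.1 i * g⁻¹, conj_mem_pTuples g v.2⟩
  one_smul v := Subtype.ext <| funext fun i => show 1 * v.1 i * 1⁻¹ = v.1 i by group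
  mul_smul g h v := Subtype.ext <| funext fun i =>
    show g * h * v.1 i * (g * h)⁻¹ = g * (h * v.1 i * h⁻¹) * g⁻¹ by group

theorem pTuples.coe_smul_apply (g : G) (v : pTuples G p n) (i : Fin n) :
    (g • v).1 i = g * v.1 i * g⁻¹ :=
  rfl

theorem tupleConj_iff_orbitRel (a b : pTuples G p n) :
    tupleConj (pTuples G p n) a b ↔ orbitRel G (pTuples G p n) b a := by
  rw [orbitRel_apply, mem_orbit_iff]
  simp only [Subtype.ext_iff, funext_iff, pTuples.coe_smul_apply, tupleConj]

theorem natCard_quot_tupleConj :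
    Nat.card (Quot (tupleConj (pTuples G p n))) = Nat.card (orbitRel.Quotient G (pTuples G p n)) :=
  Nat.card_congr <| Quot.congrRight fun a b =>
    (tupleConj_iff_orbitRel a b).trans (orbitRel G _).comm'

theorem natCard_fixedBy_pTuples
    (hcomm : ∀ x y : G, (∃ k, orderOf x = p ^ k) → (∃ k, orderOf y = p ^ k) → Commute x y)
    (g : G) :
    Nat.card (fixedBy (pTuples G p n) g) =
      Nat.card {x : G // (∃ k, orderOf x = p ^ k) ∧ Commute g x} ^ n := by
  have hfix (v : pTuples G p n) : v ∈ fixedBy (pTuples G p n) g ↔ ∀ i, Commute g (v.1 i) := by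
    simp only [mem_fixedBy, Subtype.ext_iff, funext_iff, pTuples.coe_smul_apply,
      mul_inv_eq_iff_eq_mul, Commute, SemiconjBy]
  let e : fixedBy (pTuples G p n) g ≃
      (Fin n → {x : G // (∃ k, orderOf x = p ^ k) ∧ Commute g x}) :=
    { toFun := fun v i => ⟨v.1.1 i, v.1.2.2 i, (hfix v.1).1 v.2 i⟩
      invFun := fun w =>
        ⟨⟨fun i => (w i).1, fun i j => hcomm _ _ (w i).2.1 (w j).2.1, fun i => (w i).2.1⟩,
          (hfix _).2 fun i => (w i).2.2⟩
      left_inv := fun _ => rfl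
      right_inv := fun _ => rfl }
  rw [Nat.card_congr e, Nat.card_fun, Nat.card_fin]

end Conjugation

theorem sum_natCard_fixedBy_eq_natCard_orbits_mul_card (G X : Type*) [Group G] [Fintype G]
    [MulAction G X] [Finite X] :
    ∑ g : G, Nat.card (fixedBy X g) = Nat.card (orbitRel.Quotient G X) * Fintype.card G := by
  classical
  have := Fintype.ofFinite X
  have := Fintype.ofFinite (orbitRel.Quotient G X)
  simp only [Nat.card_eq_fintype_card]
  exact sum_card_fixedBy_eq_card_orbits_mul_card_group G X

theorem exists_orderOf_eq_prime_pow_iff_pow_eq_one {G : Type*} [Group G] [Finite G] {p : ℕ}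
    (hp : p.Prime) (hG : ¬p ^ 2 ∣ Nat.card G) (x : G) :
    (∃ k, orderOf x = p ^ k) ↔ x ^ p = 1 := by
  constructor
  · rintro ⟨k, hk⟩
    have hk1 : k ≤ 1 := by
      by_contra! h
      exact hG <| (pow_dvd_pow p h).trans (hk ▸ orderOf_dvd_natCard x)
    rw [← orderOf_dvd_iff_pow_eq_one, hk]
    simpa using pow_dvd_pow p hk1
  · intro h
    have : Fact p.Prime := ⟨hp⟩
    exact exists_orderOf_eq_prime_pow_iff.2 ⟨1, by simpa using h⟩

namespace Equiv.Perm

theorem exists_orderOf_eq_three_pow_iff (x : Perm (Fin 3)) :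
    (∃ k, orderOf x = 3 ^ k) ↔ x ^ 3 = 1 :=
  exists_orderOf_eq_prime_pow_iff_pow_eq_one Nat.prime_three (by simp; decide) x

theorem commute_of_pow_three_eq_one {x y : Perm (Fin 3)} (hx : x ^ 3 = 1) (hy : y ^ 3 = 1) :
    Commute x y := by
  have : ∀ x y : Perm (Fin 3), x ^ 3 = 1 → y ^ 3 = 1 → x * y = y * x := by decide
  exact this x y hx hy

theorem sum_natCard_centralizer_cubes_pow (n : ℕ) :
    ∑ g : Perm (Fin 3), Nat.card {x : Perm (Fin 3) // x ^ 3 = 1 ∧ Commute g x} ^ n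
      = 3 * 3 ^ n + 3 := by
  have hcard (g : Perm (Fin 3)) :
      Nat.card {x : Perm (Fin 3) // x ^ 3 = 1 ∧ Commute g x} = if g ^ 3 = 1 then 3 else 1 := by
    simp only [commute_iff_eq, Nat.card_eq_fintype_card, Fintype.card_subtype]
    revert g; decide
  have hcubes : (Finset.univ.filter fun g : Perm (Fin 3) => g ^ 3 = 1).card = 3 := by decide
  have hnoncubes : (Finset.univ.filter fun g : Perm (Fin 3) => ¬g ^ 3 = 1).card = 3 := by decide
  simp only [hcard, ite_pow, one_pow, Finset.sum_ite, Finset.sum_const, smul_eq_mul, hcubes,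
    hnoncubes]
  ring

end Equiv.Perm

theorem s3_orbit_count_general (n : ℕ) :
    2 * Nat.card (Quot (tupleConj (pTuples (Equiv.Perm (Fin 3)) 3 n))) = 3 ^ n + 1 := by
  have hburnside :=
    sum_natCard_fixedBy_eq_natCard_orbits_mul_card (Perm (Fin 3)) (pTuples (Perm (Fin 3)) 3 n)
  have hcomm (x y : Perm (Fin 3)) (hx : ∃ k, orderOf x = 3 ^ k) (hy : ∃ k, orderOf y = 3 ^ k) :
      Commute x y :=
    Perm.commute_of_pow_three_eq_one ((Perm.exists_orderOf_eq_three_pow_iff x).1 hx)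
      ((Perm.exists_orderOf_eq_three_pow_iff y).1 hy)
  simp only [natCard_fixedBy_pTuples hcomm, Perm.exists_orderOf_eq_three_pow_iff,
    Perm.sum_natCard_centralizer_cubes_pow, Fintype.card_perm, Fintype.card_fin,
    Nat.factorial] at hburnside
  rw [natCard_quot_tupleConj]
  omega

/-- Twice the number of orbits of the symmetric group `S₃` acting by simultaneous
conjugation on `(S₃)_{n,3}` equals `3ⁿ + 1`. -/
theorem s3_orbit_count (n : ℕ) (hn : 1 ≤ n) :
    2 * Nat.card (Quot (tupleConj (pTuples (Equiv.Perm (Fin 3)) 3 n))) = 3 ^ n + 1 :=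
  s3_orbit_count_general n
end
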